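/- A charge spectrum w minimally allows the top Yukawa if and only if w.qHd = none, w.Q5 = ∅, and there exists q : ℤ with w.qHu = some q such that either w.Q10 = {a} for some a with a + a = q, or w.Q10 = {a, b} for some a ≠ b with a + b = q. -/

import Mathlib

/-- A charge spectrum for the `SU(5)` model: optional Higgs charges and
finite sets of distinct matter charges. -/
structure ChargeSpectrum where
  qHd : Option ℤ
  qHu : Option ℤ
  Q5 : Finset ℤ
  Q10 : Finset ℤ
deriving DecidableEq

namespace ChargeSpectrum

instance : HasSubset ChargeSpectrum where
  Subset x y :=
    x.qHd.toFinset ⊆ y.qHd.toFinset ∧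
    x.qHu.toFinset ⊆ y.qHu.toFinset ∧
    x.Q5 ⊆ y.Q5 ∧ x.Q10 ⊆ y.Q10

/-- `x` allows the top Yukawa coupling `10 10 5_Hu`. -/
def AllowsTopYukawa (x : ChargeSpectrum) : Prop :=
  ∃ q : ℤ, x.qHu = some q ∧ ∃ q1 ∈ x.Q10, ∃ q2 ∈ x.Q10, q1 + q2 = q

/-- `x` is complete: both Higgs sectors present, both matter sectors nonempty. -/
def IsComplete (x : ChargeSpectrum) : Prop :=
  x.qHd.isSome ∧ x.qHu.isSome ∧ x.Q5 ≠ ∅ ∧ x.Q10 ≠ ∅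

/-- `x` allows at least one of the dangerous operators μ, β, Λ, W1, W2, W4, K1, K2. -/
def IsPhenoConstrained (x : ChargeSpectrum) : Prop :=
  (∃ a : ℤ, x.qHd = some a ∧ x.qHu = some a) ∨
  (∃ b : ℤ, x.qHu = some b ∧ b ∈ x.Q5) ∨
  (∃ q5 ∈ x.Q5, ∃ q5' ∈ x.Q5, ∃ q10 ∈ x.Q10, q5 + q5' + q10 = 0) ∨
  (∃ q10 ∈ x.Q10, ∃ q10' ∈ x.Q10, ∃ q10'' ∈ x.Q10, ∃ q5 ∈ x.Q5,
    q10 + q10' + q10'' + q5 = 0) ∨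
  (∃ a : ℤ, x.qHd = some a ∧ ∃ q10 ∈ x.Q10, ∃ q10' ∈ x.Q10, ∃ q10'' ∈ x.Q10,
    q10 + q10' + q10'' + a = 0) ∨
  (∃ a : ℤ, x.qHd = some a ∧ ∃ b : ℤ, x.qHu = some b ∧ ∃ q5 ∈ x.Q5,
    q5 + a - 2 * b = 0) ∨
  (∃ q10 ∈ x.Q10, ∃ q10' ∈ x.Q10, ∃ q5 ∈ x.Q5, q10 + q10' - q5 = 0) ∨
  (∃ a : ℤ, x.qHd = some a ∧ ∃ b : ℤ, x.qHu = some b ∧ ∃ q10 ∈ x.Q10,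
    a + b + q10 = 0)

/-- `w` minimally allows the top Yukawa: it allows it, but no proper
sub-spectrum does. -/
def MinimallyAllowsTopYukawa (w : ChargeSpectrum) : Prop :=
  AllowsTopYukawa w ∧ ∀ y : ChargeSpectrum, y ⊆ w → y ≠ w → ¬ AllowsTopYukawa y

/-- The bounded class of charge spectra built from the finite charge menus
`S5` and `S10`. -/
def ofFinset (S5 S10 : Finset ℤ) : Finset ChargeSpectrum :=
  ((({none} ∪ S5.image Option.some) ×ˢ ({none} ∪ S5.image Option.some)) ×ˢ
      (S5.powerset ×ˢ S10.powerset)).image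
    fun p => ⟨p.1.1, p.1.2, p.2.1, p.2.2⟩

/-- Insert a charge into the `Q5` sector. -/
def insertQ5 (x : ChargeSpectrum) (q : ℤ) : ChargeSpectrum :=
  ⟨x.qHd, x.qHu, insert q x.Q5, x.Q10⟩

/-- Insert a charge into the `Q10` sector. -/
def insertQ10 (x : ChargeSpectrum) (q : ℤ) : ChargeSpectrum :=
  ⟨x.qHd, x.qHu, x.Q5, insert q x.Q10⟩

/-- `MemV S5 S10 x` says that `x` lies in the least class `V(S5, S10)` generated
from seeds (completions of minimal top-Yukawa witnesses that are not
pheno-constrained) by the `Q5`- and `Q10`-closure moves. -/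
inductive MemV (S5 S10 : Finset ℤ) : ChargeSpectrum → Prop
  | seed (w : ChargeSpectrum) (hw : w ∈ ofFinset S5 S10)
      (hmin : MinimallyAllowsTopYukawa w) (a b : ℤ) (ha : a ∈ S5) (hb : b ∈ S5)
      (hc : ¬ IsPhenoConstrained ⟨some a, w.qHu, {b}, w.Q10⟩) :
      MemV S5 S10 ⟨some a, w.qHu, {b}, w.Q10⟩
  | q5Closure (x : ChargeSpectrum) (hx : MemV S5 S10 x) (q : ℤ) (hq : q ∈ S5)
      (h : ¬ IsPhenoConstrained (insertQ5 x q)) : MemV S5 S10 (insertQ5 x q)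
  | q10Closure (x : ChargeSpectrum) (hx : MemV S5 S10 x) (q : ℤ) (hq : q ∈ S10)
      (h : ¬ IsPhenoConstrained (insertQ10 x q)) : MemV S5 S10 (insertQ10 x q)

end ChargeSpectrum

/-
The spectrum `⟨none, some (a + b), ∅, {a, b}⟩` allows the top Yukawa and lies inside every
spectrum that allows it through the charges `a, b ∈ Q10`, so minimality forces a minimal witness
to be of this form. Conversely, a coupling `r₁ + r₂ = a + b` with `r₁, r₂ ∈ {a, b}` uses both
`a` and `b`, so no proper sub-spectrum allows it.
-/

theorem Option.toFinset_injective {α : Type*} :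
    Function.Injective (Option.toFinset : Option α → Finset α) := by
  rintro (_ | a) (_ | b) h <;> simp_all

theorem Finset.pair_subset_pair_of_add_eq {M : Type*} [AddCommMonoid M] [IsCancelAdd M]
    [DecidableEq M] {a b r₁ r₂ : M} (h₁ : r₁ ∈ ({a, b} : Finset M)) (h₂ : r₂ ∈ ({a, b} : Finset M))
    (h : r₁ + r₂ = a + b) : ({a, b} : Finset M) ⊆ {r₁, r₂} := by
  simp only [Finset.mem_insert, Finset.mem_singleton] at h₁ h₂
  rcases h₁ with rfl | rfl <;> rcases h₂ with rfl | rfl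
  · obtain rfl := add_left_cancel h
    simp
  · simp
  · simp [Finset.pair_comm]
  · obtain rfl := add_right_cancel h
    simp

theorem Finset.eq_singleton_or_eq_pair_iff {M : Type*} [Add M] [DecidableEq M] (s : Finset M)
    (q : M) :
    ((∃ a, s = {a} ∧ a + a = q) ∨ (∃ a b, a ≠ b ∧ s = {a, b} ∧ a + b = q)) ↔
      ∃ a b, s = {a, b} ∧ a + b = q := by
  constructor
  · rintro (⟨a, rfl, h⟩ | ⟨a, b, -, rfl, h⟩)
    · exact ⟨a, a, (Finset.pair_eq_singleton a).symm, h⟩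
    · exact ⟨a, b, rfl, h⟩
  · rintro ⟨a, b, rfl, h⟩
    obtain rfl | hab := eq_or_ne a b
    · exact Or.inl ⟨a, Finset.pair_eq_singleton a, h⟩
    · exact Or.inr ⟨a, b, hab, rfl, h⟩

namespace ChargeSpectrum

theorem subset_antisymm {x y : ChargeSpectrum} (hxy : x ⊆ y) (hyx : y ⊆ x) : x = y := by
  obtain ⟨hd, hu, h5, h10⟩ := hxy
  obtain ⟨hd', hu', h5', h10'⟩ := hyx
  cases x; cases y
  simp only [mk.injEq]
  exact ⟨Option.toFinset_injective (hd.antisymm hd'), Option.toFinset_injective (hu.antisymm hu'),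
    h5.antisymm h5', h10.antisymm h10'⟩

theorem qHu_eq_of_subset {x y : ChargeSpectrum} {q : ℤ} (h : x ⊆ y) (hx : x.qHu = some q) :
    y.qHu = some q := by
  simpa [hx, Option.mem_toFinset] using h.2.1 (by simp [hx] : q ∈ x.qHu.toFinset)

theorem AllowsTopYukawa.mono {x y : ChargeSpectrum} (h : x ⊆ y) :
    AllowsTopYukawa x → AllowsTopYukawa y := by
  rintro ⟨q, hq, q₁, h₁, q₂, h₂, hsum⟩
  exact ⟨q, qHu_eq_of_subset h hq, q₁, h.2.2.2 h₁, q₂, h.2.2.2 h₂, hsum⟩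

def topYukawaPair (a b : ℤ) : ChargeSpectrum :=
  ⟨none, some (a + b), ∅, {a, b}⟩

theorem allowsTopYukawa_topYukawaPair (a b : ℤ) : AllowsTopYukawa (topYukawaPair a b) :=
  ⟨a + b, rfl, a, by simp [topYukawaPair], b, by simp [topYukawaPair], rfl⟩

theorem topYukawaPair_subset {x : ChargeSpectrum} {a b : ℤ} (hq : x.qHu = some (a + b))
    (ha : a ∈ x.Q10) (hb : b ∈ x.Q10) : topYukawaPair a b ⊆ x := by
  refine ⟨by simp [topYukawaPair], by simp [topYukawaPair, hq], by simp [topYukawaPair], ?_⟩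
  simp [topYukawaPair, Finset.insert_subset_iff, ha, hb]

theorem allowsTopYukawa_iff_exists_topYukawaPair_subset {x : ChargeSpectrum} :
    AllowsTopYukawa x ↔ ∃ a b, topYukawaPair a b ⊆ x := by
  constructor
  · rintro ⟨q, hq, a, ha, b, hb, rfl⟩
    exact ⟨a, b, topYukawaPair_subset hq ha hb⟩
  · rintro ⟨a, b, h⟩
    exact (allowsTopYukawa_topYukawaPair a b).mono h

theorem minimallyAllowsTopYukawa_topYukawaPair (a b : ℤ) :
    MinimallyAllowsTopYukawa (topYukawaPair a b) := by
  refine ⟨allowsTopYukawa_topYukawaPair a b, fun y hy hne ⟨q, hq, r₁, h₁, r₂, h₂, hsum⟩ => hne ?_⟩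
  have hq' : q = a + b := by simpa [topYukawaPair, eq_comm] using qHu_eq_of_subset hy hq
  have hab : ({a, b} : Finset ℤ) ⊆ y.Q10 :=
    (Finset.pair_subset_pair_of_add_eq (hy.2.2.2 h₁) (hy.2.2.2 h₂) (hsum.trans hq')).trans
      (Finset.insert_subset h₁ (Finset.singleton_subset_iff.mpr h₂))
  obtain ⟨ha, hb⟩ : a ∈ y.Q10 ∧ b ∈ y.Q10 := by simpa [Finset.insert_subset_iff] using hab
  exact subset_antisymm hy (topYukawaPair_subset (hq' ▸ hq) ha hb)

theorem minimallyAllowsTopYukawa_iff_exists_eq_topYukawaPair {w : ChargeSpectrum} :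
    MinimallyAllowsTopYukawa w ↔ ∃ a b, w = topYukawaPair a b := by
  constructor
  · rintro ⟨hw, hmin⟩
    obtain ⟨a, b, hsub⟩ := allowsTopYukawa_iff_exists_topYukawaPair_subset.mp hw
    by_contra! hne
    exact hmin _ hsub (hne a b).symm (allowsTopYukawa_topYukawaPair a b)
  · rintro ⟨a, b, rfl⟩
    exact minimallyAllowsTopYukawa_topYukawaPair a b

end ChargeSpectrum

open ChargeSpectrum in
/-- characterization of minimal top-Yukawa witnesses. -/
theorem minimallyAllowsTopYukawa_iff (w : ChargeSpectrum) :
    MinimallyAllowsTopYukawa w ↔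
      w.qHd = none ∧ w.Q5 = ∅ ∧
        ∃ q : ℤ, w.qHu = some q ∧
          ((∃ a : ℤ, w.Q10 = {a} ∧ a + a = q) ∨
            (∃ a b : ℤ, a ≠ b ∧ w.Q10 = {a, b} ∧ a + b = q)) := by
  obtain ⟨d, u, f, t⟩ := w
  simp only [minimallyAllowsTopYukawa_iff_exists_eq_topYukawaPair, topYukawaPair, mk.injEq,
    Finset.eq_singleton_or_eq_pair_iff]
  constructor
  · rintro ⟨a, b, rfl, rfl, rfl, rfl⟩
    exact ⟨rfl, rfl, a + b, rfl, a, b, rfl, rfl⟩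
  · rintro ⟨rfl, rfl, _, rfl, a, b, rfl, rfl⟩
    exact ⟨a, b, rfl, rfl, rfl, rfl⟩
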